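/- Let Γ be a finite connected induced subgraph of the triangular grid with exactly h inner holes. Then there exist m ≤ 3h+1 subsets R_1,…,R_m ⊆ V with R_1 ∪ … ∪ R_m = V such that each R_i induces a connected subgraph of Γ and each R_i has no inner holes (each R_i is a simple region). -/

import Mathlib

open SimpleGraph

/-- The infinite triangular grid graph on `ℤ × ℤ`. -/
def triGrid : SimpleGraph (ℤ × ℤ) where
  Adj u v := u - v = (1, 0) ∨ u - v = (-1, 0) ∨ u - v = (0, 1) ∨ u - v = (0, -1) ∨
    u - v = (1, -1) ∨ u - v = (-1, 1)
  symm := ⟨by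
    intro u v h
    have hvu : v - u = -(u - v) := by ring
    rcases h with h | h | h | h | h | h <;> rw [hvu, h] <;> simp [Prod.ext_iff]⟩
  loopless := ⟨by
    intro u h
    simp [Prod.ext_iff] at h⟩

/-- A finite set is hole-free (simple) if every connected component of the complement
is infinite, i.e., there are no inner holes. -/
def HoleFree (S : Set (ℤ × ℤ)) : Prop :=
  ∀ C : (triGrid.induce Sᶜ).ConnectedComponent, C.supp.Infinite

/-- The graph on `V` whose edges are the edges of the induced grid graph in direction `±e`. -/
def portalLineGraph (V : Set (ℤ × ℤ)) (e : ℤ × ℤ) : SimpleGraph V where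
  Adj u v := triGrid.Adj u v ∧ ((u : ℤ × ℤ) - v = e ∨ (v : ℤ × ℤ) - u = e)
  symm := ⟨fun u v ⟨h, h'⟩ => ⟨h.symm, h'.symm⟩⟩
  loopless := ⟨fun u ⟨h, _⟩ => triGrid.irrefl h⟩

/-- The `e`-portals of the induced subgraph on `V`: connected components of `portalLineGraph`. -/
abbrev Portal (V : Set (ℤ × ℤ)) (e : ℤ × ℤ) := (portalLineGraph V e).ConnectedComponent

/-- The portal containing a given vertex. -/
def portalMk (V : Set (ℤ × ℤ)) (e : ℤ × ℤ) (u : V) : Portal V e :=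
  (portalLineGraph V e).connectedComponentMk u

/-- The `e`-portal graph: vertices are the `e`-portals, two portals being adjacent iff
some edge of the induced grid graph joins them. -/
def portalGraph (V : Set (ℤ × ℤ)) (e : ℤ × ℤ) : SimpleGraph (Portal V e) where
  Adj P Q := P ≠ Q ∧ ∃ u v : V, (triGrid.induce V).Adj u v ∧
    portalMk V e u = P ∧ portalMk V e v = Q
  symm := ⟨fun P Q ⟨hne, u, v, h, hu, hv⟩ => ⟨hne.symm, v, u, h.symm, hv, hu⟩⟩
  loopless := ⟨fun P h => h.1 rfl⟩

/-- Distance between the portals of `u` and `v` in the `e`-portal graph. -/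
noncomputable def portalDist (V : Set (ℤ × ℤ)) (e : ℤ × ℤ) (u v : V) : ℕ :=
  (portalGraph V e).dist (portalMk V e u) (portalMk V e v)

/-- A set `P` is an `e`-portal of the induced subgraph on `V` (as a set of grid points). -/
def IsPortal (V : Set (ℤ × ℤ)) (e : ℤ × ℤ) (P : Set (ℤ × ℤ)) : Prop :=
  ∃ C : Portal V e, P = Subtype.val '' C.supp

/-- `R` is geodesically convex in the subgraph induced on `V`: for all `u, v ∈ R`,
every shortest `u`–`v` path in the induced graph stays inside `R`. -/
def GeodesicallyConvex (V R : Set (ℤ × ℤ)) : Prop :=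
  ∀ u v : V, (u : ℤ × ℤ) ∈ R → (v : ℤ × ℤ) ∈ R →
    ∀ p : (triGrid.induce V).Walk u v, p.length = (triGrid.induce V).dist u v →
      ∀ w ∈ p.support, (w : ℤ × ℤ) ∈ R

/-!
Cut every inner hole open along the vertical run of `V` directly above its top point (highest
row, then rightmost), and call the components of what is left of `V` its classes. A point
outside a region `R` that is a union of classes can always climb strictly upwards in the
complement of `R`: from the top of its class it steps up out of the class, on a cut it steps
up along the cut, and in a hole it walks to the top of the hole and then onto the cut. Since
`V` is bounded, climbing ends in the unbounded component of the complement of `V`, so such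
regions have no inner holes. The same holds if `R` also contains the whole cut of one hole,
provided it avoids the right neighbour of that hole's top, which then serves as the hole's
escape route. So each class is merged with one cut it touches, except the classes containing
such a right neighbour (at most one per hole), which become regions of their own: at most
`2h` simple regions, or the single region `V` when there is no hole.
-/

namespace TriGrid

lemma adj_up (p : ℤ × ℤ) : triGrid.Adj p (p.1, p.2 + 1) := by
  simp [triGrid, Prod.ext_iff]

lemma adj_right (p : ℤ × ℤ) : triGrid.Adj p (p.1 + 1, p.2) := by
  simp [triGrid, Prod.ext_iff]

lemma adj_upLeft (p : ℤ × ℤ) : triGrid.Adj p (p.1 - 1, p.2 + 1) := by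
  simp [triGrid, Prod.ext_iff]

inductive Linked (A : Set (ℤ × ℤ)) : ℤ × ℤ → ℤ × ℤ → Prop
  | refl {a} : a ∈ A → Linked A a a
  | tail {a b c} : Linked A a b → triGrid.Adj b c → c ∈ A → Linked A a c

variable {A B S V R H : Set (ℤ × ℤ)} {a b c p q r v w x : ℤ × ℤ}

namespace Linked

lemma mem_left (h : Linked A a b) : a ∈ A := by
  induction h with
  | refl ha => exact ha
  | tail _ _ _ ih => exact ih

lemma mem_right (h : Linked A a b) : b ∈ A := by
  cases h with
  | refl hb => exact hb
  | tail _ _ hc => exact hc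

lemma single (ha : a ∈ A) (hab : triGrid.Adj a b) (hb : b ∈ A) : Linked A a b :=
  (refl ha).tail hab hb

lemma trans (hab : Linked A a b) (hbc : Linked A b c) : Linked A a c := by
  induction hbc with
  | refl _ => exact hab
  | tail _ hadj hc ih => exact ih.tail hadj hc

lemma symm (h : Linked A a b) : Linked A b a := by
  induction h with
  | refl ha => exact refl ha
  | tail hab hadj hc ih => exact (single hc hadj.symm hab.mem_right).trans ih

lemma mono (hAB : A ⊆ B) (h : Linked A a b) : Linked B a b := by
  induction h with
  | refl ha => exact refl (hAB ha)
  | tail _ hadj hc ih => exact ih.tail hadj (hAB hc)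

lemma reachable (h : Linked A a b) :
    (triGrid.induce A).Reachable ⟨a, h.mem_left⟩ ⟨b, h.mem_right⟩ := by
  induction h with
  | refl _ => rfl
  | tail _ hadj _ ih => exact ih.trans (Adj.reachable (by exact hadj))

lemma exists_adj_notMem (h : Linked A a b) (ha : a ∈ S) (hb : b ∉ S) :
    ∃ x ∈ S, ∃ y ∈ A, triGrid.Adj x y ∧ y ∉ S := by
  induction h with
  | refl _ => exact absurd ha hb
  | @tail b' _ _ hadj hc ih =>
    by_cases hb' : b' ∈ S
    · exact ⟨b', hb', _, hc, hadj, hb⟩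
    · exact ih hb'

end Linked

lemma linked_of_reachable {a b : A} (h : (triGrid.induce A).Reachable a b) : Linked A a b := by
  obtain ⟨p⟩ := h
  induction p with
  | nil => exact .refl (Subtype.mem _)
  | cons hadj _ ih => exact (Linked.single (Subtype.mem _) hadj (Subtype.mem _)).trans ih

def gridComponentIn (A : Set (ℤ × ℤ)) (a : ℤ × ℤ) : Set (ℤ × ℤ) := {x | Linked A a x}

lemma gridComponentIn_subset : gridComponentIn A a ⊆ A := fun _ h => h.mem_right

lemma mem_gridComponentIn_self (ha : a ∈ A) : a ∈ gridComponentIn A a := .refl ha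

lemma gridComponentIn_eq (h : Linked A a b) : gridComponentIn A a = gridComponentIn A b :=
  Set.ext fun _ => ⟨h.symm.trans, h.trans⟩

lemma linked_gridComponentIn (hx : x ∈ gridComponentIn A a) :
    Linked (gridComponentIn A a) a x := by
  induction hx with
  | refl ha => exact .refl (mem_gridComponentIn_self ha)
  | tail hab hadj hc ih => exact ih.tail hadj (hab.tail hadj hc)

lemma connected_induce_of_linked (hc : c ∈ S) (h : ∀ x ∈ S, Linked S x c) :
    (triGrid.induce S).Connected :=
  (connected_iff_exists_forall_reachable _).mpr ⟨⟨c, hc⟩, fun x => (h x x.2).symm.reachable⟩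

lemma connected_induce_gridComponentIn (ha : a ∈ A) :
    (triGrid.induce (gridComponentIn A a)).Connected :=
  connected_induce_of_linked (mem_gridComponentIn_self ha) fun _ hx =>
    (linked_gridComponentIn hx).symm

lemma image_val_supp_connectedComponentMk (a : A) :
    Subtype.val '' ((triGrid.induce A).connectedComponentMk a).supp = gridComponentIn A a := by
  ext x
  simp only [Set.mem_image, ConnectedComponent.mem_supp_iff, ConnectedComponent.eq]
  constructor
  · rintro ⟨y, hy, rfl⟩
    exact linked_of_reachable hy.symm
  · intro hx
    exact ⟨⟨x, hx.mem_right⟩, hx.reachable.symm, rfl⟩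

lemma holeFree_of_forall_infinite (h : ∀ q ∉ S, (gridComponentIn Sᶜ q).Infinite) :
    HoleFree S := by
  intro C
  obtain ⟨q, rfl⟩ := C.exists_rep
  exact .of_image _ (image_val_supp_connectedComponentMk q ▸ h q q.2)

def lexKey (p : ℤ × ℤ) : ℤ ×ₗ ℤ := toLex (p.2, p.1)

lemma lexKey_le_iff : lexKey p ≤ lexKey q ↔ p.2 < q.2 ∨ p.2 = q.2 ∧ p.1 ≤ q.1 :=
  Prod.Lex.toLex_le_toLex

lemma lexKey_lt_of_snd_lt (h : p.2 < q.2) : lexKey p < lexKey q :=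
  Prod.Lex.toLex_lt_toLex.mpr (Or.inl h)

noncomputable def lexTop (S : Set (ℤ × ℤ)) : ℤ × ℤ :=
  Classical.epsilon fun r => r ∈ S ∧ ∀ p ∈ S, lexKey p ≤ lexKey r

lemma lexTop_spec (hS : S.Finite) (hne : S.Nonempty) :
    lexTop S ∈ S ∧ ∀ p ∈ S, lexKey p ≤ lexKey (lexTop S) :=
  Classical.epsilon_spec (S.exists_max_image lexKey hS hne)

lemma linked_lexTop (hfin : (gridComponentIn A a).Finite) (ha : a ∈ A) :
    Linked A a (lexTop (gridComponentIn A a)) :=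
  (lexTop_spec hfin ⟨a, mem_gridComponentIn_self ha⟩).1

lemma snd_le_lexTop (hfin : (gridComponentIn A a).Finite) (ha : a ∈ A) :
    a.2 ≤ (lexTop (gridComponentIn A a)).2 := by
  have := lexKey_le_iff.mp
    ((lexTop_spec hfin ⟨a, mem_gridComponentIn_self ha⟩).2 a (mem_gridComponentIn_self ha))
  omega

lemma notMem_of_adj_lexTop (hfin : (gridComponentIn A a).Finite) (ha : a ∈ A)
    (hadj : triGrid.Adj (lexTop (gridComponentIn A a)) q)
    (hlt : lexKey (lexTop (gridComponentIn A a)) < lexKey q) : q ∉ A := fun hq =>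
  ((lexTop_spec hfin ⟨a, mem_gridComponentIn_self ha⟩).2 q
    ((linked_lexTop hfin ha).tail hadj hq)).not_gt hlt

lemma exists_adj_above_notMem (hfin : (gridComponentIn A a).Finite) (ha : a ∈ A)
    (col : ℤ) :
    ∃ w ∈ gridComponentIn A a, ∃ e, triGrid.Adj w e ∧ e ∉ A ∧ e.1 ≠ col ∧ a.2 < e.2 := by
  have hw := linked_lexTop hfin ha
  have haw := snd_le_lexTop hfin ha
  have hup : ∀ e, triGrid.Adj (lexTop (gridComponentIn A a)) e →
      e.2 = (lexTop (gridComponentIn A a)).2 + 1 → e ∉ A := fun e he hy =>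
    notMem_of_adj_lexTop hfin ha he (lexKey_lt_of_snd_lt (by omega))
  generalize lexTop (gridComponentIn A a) = w at hw haw hup
  by_cases hcol : w.1 = col
  · exact ⟨w, hw, _, adj_upLeft w, hup _ (adj_upLeft w) rfl,
      by simp only; omega, by simp only; omega⟩
  · exact ⟨w, hw, _, adj_up w, hup _ (adj_up w) rfl, hcol,
      by simp only; omega⟩

lemma up_lexTop_mem (hq : q ∉ V) (hfin : (gridComponentIn Vᶜ q).Finite) :
    ((lexTop (gridComponentIn Vᶜ q)).1, (lexTop (gridComponentIn Vᶜ q)).2 + 1) ∈ V :=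
  Set.notMem_compl_iff.mp <| notMem_of_adj_lexTop hfin hq (adj_up _)
    (lexKey_lt_of_snd_lt (by simp))

lemma right_lexTop_mem (hq : q ∉ V) (hfin : (gridComponentIn Vᶜ q).Finite) :
    ((lexTop (gridComponentIn Vᶜ q)).1 + 1, (lexTop (gridComponentIn Vᶜ q)).2) ∈ V :=
  Set.notMem_compl_iff.mp <| notMem_of_adj_lexTop hfin hq (adj_right _)
    (Prod.Lex.toLex_lt_toLex.mpr (Or.inr ⟨rfl, by simp⟩))

lemma exists_mem_snd_lt (hq : q ∉ V) (hfin : (gridComponentIn Vᶜ q).Finite) :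
    ∃ p ∈ V, q.2 < p.2 :=
  ⟨_, up_lexTop_mem hq hfin, by have := snd_le_lexTop hfin hq; simp only; omega⟩

lemma holeFree_of_exists_linked_higher (hV : V.Finite) (hRV : R ⊆ V)
    (hstep : ∀ q ∉ R, (gridComponentIn Vᶜ q).Finite → ∃ q', Linked Rᶜ q q' ∧ q.2 < q'.2) :
    HoleFree R := by
  obtain ⟨Y, hY⟩ := (hV.image Prod.snd).bddAbove
  have hbelow : ∀ q, (gridComponentIn Vᶜ q).Finite → q.2 ≤ Y := by
    intro q hfin
    by_cases hq : q ∈ V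
    · exact hY (Set.mem_image_of_mem _ hq)
    · obtain ⟨p, hp, hqp⟩ := exists_mem_snd_lt hq hfin
      exact hqp.le.trans (hY (Set.mem_image_of_mem _ hp))
  have hclimb : ∀ n : ℕ, ∀ q ∉ R, (Y + 1 - q.2).toNat = n →
      ∃ q', Linked Rᶜ q q' ∧ (gridComponentIn Vᶜ q').Infinite := by
    intro n
    induction n using Nat.strong_induction_on with
    | _ n ih =>
      intro q hqR hn
      by_cases hfin : (gridComponentIn Vᶜ q).Finite
      · obtain ⟨q', hqq', hlt⟩ := hstep q hqR hfin
        have := hbelow q hfin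
        obtain ⟨q'', hq'q'', hinf⟩ := ih _ (by omega) q' hqq'.mem_right rfl
        exact ⟨q'', hqq'.trans hq'q'', hinf⟩
      · exact ⟨q, .refl hqR, hfin⟩
  refine holeFree_of_forall_infinite fun q hqR => ?_
  obtain ⟨q', hqq', hinf⟩ := hclimb _ q hqR rfl
  exact hinf.mono fun x hx => hqq'.trans (hx.mono (Set.compl_subset_compl.mpr hRV))

def innerHoles (V : Set (ℤ × ℤ)) : Set (Set (ℤ × ℤ)) :=
  {H | ∃ q ∉ V, gridComponentIn Vᶜ q = H ∧ H.Finite}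

lemma ncard_innerHoles : (innerHoles V).ncard =
    {C : (triGrid.induce Vᶜ).ConnectedComponent | C.supp.Finite}.ncard := by
  have hinj : Function.Injective
      fun C : (triGrid.induce Vᶜ).ConnectedComponent => Subtype.val '' C.supp := by
    intro C D hCD
    induction C using ConnectedComponent.ind with | h a =>
    induction D using ConnectedComponent.ind with | h b =>
    dsimp only at hCD
    rw [image_val_supp_connectedComponentMk, image_val_supp_connectedComponentMk] at hCD
    have hab : (b : ℤ × ℤ) ∈ gridComponentIn Vᶜ a := hCD ▸ mem_gridComponentIn_self b.2
    exact ConnectedComponent.sound hab.reachable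
  rw [← Set.ncard_image_of_injective _ hinj]
  congr 1
  ext H
  constructor
  · rintro ⟨q, hq, rfl, hfin⟩
    have h := image_val_supp_connectedComponentMk (⟨q, hq⟩ : ↥Vᶜ)
    exact ⟨_, (Set.finite_image_iff Subtype.val_injective.injOn).mp (h ▸ hfin), h⟩
  · rintro ⟨C, hC, rfl⟩
    induction C using ConnectedComponent.ind with | h q =>
    exact ⟨q, q.2, (image_val_supp_connectedComponentMk q).symm, hC.image _⟩

lemma lexTop_notMem (hH : H ∈ innerHoles V) : lexTop H ∉ V := by
  obtain ⟨q, hq, rfl, hfin⟩ := hH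
  exact (linked_lexTop hfin hq).mem_right

lemma eq_gridComponentIn_lexTop (hH : H ∈ innerHoles V) :
    H = gridComponentIn Vᶜ (lexTop H) := by
  obtain ⟨q, hq, rfl, hfin⟩ := hH
  exact gridComponentIn_eq (linked_lexTop hfin hq)

lemma innerHoles_finite (hV : V.Finite) : (innerHoles V).Finite := by
  refine Set.Finite.of_finite_image (f := fun H => ((lexTop H).1, (lexTop H).2 + 1))
    (hV.subset ?_) fun H hH H' hH' hHH' => ?_
  · rintro _ ⟨H, ⟨q, hq, rfl, hfin⟩, rfl⟩
    exact up_lexTop_mem hq hfin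
  · have : lexTop H = lexTop H' := by
      simp only [Prod.ext_iff] at hHH' ⊢
      omega
    rw [eq_gridComponentIn_lexTop hH, eq_gridComponentIn_lexTop hH', this]

def runAbove (V : Set (ℤ × ℤ)) (r : ℤ × ℤ) : Set (ℤ × ℤ) :=
  {p | p.1 = r.1 ∧ r.2 < p.2 ∧ ∀ y, r.2 < y → y ≤ p.2 → (r.1, y) ∈ V}

lemma runAbove_subset : runAbove V r ⊆ V := by
  rintro p ⟨h1, h2, h3⟩
  simpa [← h1] using h3 p.2 h2 le_rfl

lemma bottom_mem_runAbove (h : (r.1, r.2 + 1) ∈ V) : (r.1, r.2 + 1) ∈ runAbove V r :=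
  ⟨rfl, by simp, fun y hy1 hy2 => by rwa [show y = r.2 + 1 by simp only at hy2; omega]⟩

lemma up_mem_runAbove (hp : p ∈ runAbove V r) (hup : (p.1, p.2 + 1) ∈ V) :
    (p.1, p.2 + 1) ∈ runAbove V r := by
  obtain ⟨h1, h2, h3⟩ := hp
  refine ⟨h1, by simp only; omega, fun y hy1 hy2 => ?_⟩
  rcases (show y ≤ p.2 ∨ y = p.2 + 1 by simp only at hy2; omega) with hy | rfl
  · exact h3 y hy1 hy
  · rwa [← h1]

lemma eq_or_mem_runAbove_of_up_mem (h : (p.1, p.2 + 1) ∈ runAbove V r) :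
    p = r ∨ p ∈ runAbove V r := by
  obtain ⟨h1, h2, h3⟩ := h
  simp only at h1 h2
  rcases (show p.2 = r.2 ∨ r.2 < p.2 by omega) with he | hlt
  · exact Or.inl (Prod.ext h1 he)
  · exact Or.inr ⟨h1, hlt, fun y hy1 hy2 => h3 y hy1 (by simp only; omega)⟩

lemma linked_bottom_of_mem_runAbove (hp : p ∈ runAbove V r) :
    Linked (runAbove V r) p (r.1, r.2 + 1) := by
  suffices ∀ y, r.2 + 1 ≤ y → (r.1, y) ∈ runAbove V r →
      Linked (runAbove V r) (r.1, y) (r.1, r.2 + 1) by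
    obtain ⟨h1, h2, -⟩ := id hp
    rw [← h1] at this ⊢
    exact this p.2 h2 hp
  intro y hy
  induction y, hy using Int.leInduction with
  | base => exact .refl
  | succ y hy ih =>
    intro h
    have hy' : (r.1, y) ∈ runAbove V r :=
      (eq_or_mem_runAbove_of_up_mem h).resolve_left fun he => by
        simp only [Prod.ext_iff] at he; omega
    exact (Linked.single h (adj_up (r.1, y)).symm hy').trans (ih hy')

def cuts (V : Set (ℤ × ℤ)) : Set (ℤ × ℤ) := ⋃ H ∈ innerHoles V, runAbove V (lexTop H)

def uncut (V : Set (ℤ × ℤ)) : Set (ℤ × ℤ) := V \ cuts V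

lemma runAbove_subset_cuts (hH : H ∈ innerHoles V) : runAbove V (lexTop H) ⊆ cuts V :=
  Set.subset_biUnion_of_mem (u := fun H => runAbove V (lexTop H)) hH

lemma uncut_subset : uncut V ⊆ V := Set.sdiff_subset

lemma exists_mem_runAbove_of_notMem_uncut (hp : p ∈ V) (hpU : p ∉ uncut V) :
    ∃ H ∈ innerHoles V, p ∈ runAbove V (lexTop H) := by
  simpa [uncut, cuts, hp] using hpU

structure CutCompatible (V : Set (ℤ × ℤ)) (r : ℤ × ℤ) (R : Set (ℤ × ℤ)) : Prop where
  top_notMem : r ∉ V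
  subset : R ⊆ runAbove V r ∪ uncut V
  saturated : ∀ ⦃v w⦄, Linked (uncut V) v w → v ∈ R → w ∈ R
  cut : ∀ p ∈ runAbove V r, p ∈ R → runAbove V r ⊆ R ∧ (r.1 + 1, r.2) ∉ R

namespace CutCompatible

lemma subset_V (hR : CutCompatible V r R) : R ⊆ V := fun _ hx =>
  (hR.subset hx).elim (fun h => runAbove_subset h) (fun h => h.1)

lemma exists_linked_higher_of_mem_uncut (hV : V.Finite) (hR : CutCompatible V r R)
    (hq : q ∈ uncut V) (hqR : q ∉ R) : ∃ q', Linked Rᶜ q q' ∧ q.2 < q'.2 := by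
  have hclass : gridComponentIn (uncut V) q ⊆ Rᶜ := fun x hx hxR =>
    hqR (hR.saturated hx.symm hxR)
  obtain ⟨w, hw, e, hwe, heU, hecol, hqe⟩ := exists_adj_above_notMem
    (hV.subset (gridComponentIn_subset.trans uncut_subset)) hq r.1
  refine ⟨e, ((linked_gridComponentIn hw).mono hclass).tail hwe fun heR => ?_, hqe⟩
  rcases hR.subset heR with h | h
  · exact hecol h.1
  · exact heU h

lemma exists_linked_higher_of_mem (hV : V.Finite) (hR : CutCompatible V r R)
    (hq : q ∈ V) (hqR : q ∉ R) : ∃ q', Linked Rᶜ q q' ∧ q.2 < q'.2 := by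
  by_cases hqU : q ∈ uncut V
  · exact hR.exists_linked_higher_of_mem_uncut hV hqU hqR
  obtain ⟨H, hH, hqH⟩ := exists_mem_runAbove_of_notMem_uncut hq hqU
  refine ⟨(q.1, q.2 + 1), .single hqR (adj_up q) fun hupR => ?_, by simp⟩
  have hup : (q.1, q.2 + 1) ∈ runAbove V (lexTop H) :=
    up_mem_runAbove hqH (hR.subset_V hupR)
  have hupr : (q.1, q.2 + 1) ∈ runAbove V r :=
    (hR.subset hupR).resolve_right fun h => h.2 (runAbove_subset_cuts hH hup)
  rcases eq_or_mem_runAbove_of_up_mem hupr with rfl | hqr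
  · exact hR.top_notMem hq
  · exact hqR ((hR.cut _ hupr hupR).1 hqr)

lemma exists_linked_higher_of_notMem (hV : V.Finite) (hR : CutCompatible V r R)
    (hq : q ∉ V) (hfin : (gridComponentIn Vᶜ q).Finite) :
    ∃ q', Linked Rᶜ q q' ∧ q.2 < q'.2 := by
  have hqt := (linked_lexTop hfin hq).mono (Set.compl_subset_compl.mpr hR.subset_V)
  have hbot := bottom_mem_runAbove (up_lexTop_mem hq hfin)
  have hqt2 := snd_le_lexTop hfin hq
  have hs := right_lexTop_mem hq hfin
  have hH : gridComponentIn Vᶜ q ∈ innerHoles V := ⟨q, hq, rfl, hfin⟩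
  have htV := lexTop_notMem hH
  have hcut := runAbove_subset_cuts hH
  generalize lexTop (gridComponentIn Vᶜ q) = t at hqt hbot hqt2 hs htV hcut
  by_cases hbR : (t.1, t.2 + 1) ∈ R
  · -- the cut above the top `t` of the hole lies in `R`, so `t = r`: leave through `(r.1 + 1, r.2)`
    have hbr : (t.1, t.2 + 1) ∈ runAbove V r :=
      (hR.subset hbR).resolve_right fun h => h.2 (hcut hbot)
    obtain rfl : t = r := (eq_or_mem_runAbove_of_up_mem hbr).resolve_right
      fun h => htV (runAbove_subset h)
    have hsR := (hR.cut _ hbr hbR).2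
    obtain ⟨s', hss', hs'⟩ := hR.exists_linked_higher_of_mem hV hs hsR
    exact ⟨s', (hqt.tail (adj_right t) hsR).trans hss', by simp only at hs'; omega⟩
  · exact ⟨_, hqt.tail (adj_up t) hbR, by simp only; omega⟩

lemma holeFree (hV : V.Finite) (hR : CutCompatible V r R) : HoleFree R :=
  holeFree_of_exists_linked_higher hV hR.subset_V fun q hqR hfin => by
    by_cases hq : q ∈ V
    exacts [hR.exists_linked_higher_of_mem hV hq hqR,
      hR.exists_linked_higher_of_notMem hV hq hfin]

end CutCompatible

def conduit (V H : Set (ℤ × ℤ)) : Set (ℤ × ℤ) :=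
  gridComponentIn (uncut V) ((lexTop H).1 + 1, (lexTop H).2)

def conduits (V : Set (ℤ × ℤ)) : Set (ℤ × ℤ) := ⋃ H ∈ innerHoles V, conduit V H

lemma conduits_saturated (hvw : Linked (uncut V) v w) (hv : v ∈ conduits V) :
    w ∈ conduits V := by
  simp only [conduits, Set.mem_iUnion] at hv ⊢
  obtain ⟨H, hH, hvH⟩ := hv
  exact ⟨H, hH, Linked.trans hvH hvw⟩

noncomputable def assignedHole (V W : Set (ℤ × ℤ)) : Set (ℤ × ℤ) :=
  Classical.epsilon fun H =>
    H ∈ innerHoles V ∧ ∃ u ∈ W, ∃ z ∈ runAbove V (lexTop H), triGrid.Adj u z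

def holeRegion (V H : Set (ℤ × ℤ)) : Set (ℤ × ℤ) :=
  runAbove V (lexTop H) ∪
    {v | v ∈ uncut V ∧ v ∉ conduits V ∧ assignedHole V (gridComponentIn (uncut V) v) = H}

lemma cutCompatible_holeRegion (hH : H ∈ innerHoles V) :
    CutCompatible V (lexTop H) (holeRegion V H) where
  top_notMem := lexTop_notMem hH
  subset := Set.union_subset_union_right _ fun _ hv => hv.1
  saturated v w hvw := by
    rintro (hv | ⟨-, hvc, hva⟩)
    · exact absurd (runAbove_subset_cuts hH hv) hvw.mem_left.2
    · exact Or.inr ⟨hvw.mem_right, fun hw => hvc (conduits_saturated hvw.symm hw),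
        gridComponentIn_eq hvw ▸ hva⟩
  cut _ _ _ := by
    refine ⟨Set.subset_union_left, ?_⟩
    rintro (h | ⟨hU, hc, -⟩)
    · simp [runAbove] at h
    · exact hc (Set.mem_biUnion hH (mem_gridComponentIn_self hU))

lemma cutCompatible_conduit (hH : H ∈ innerHoles V) :
    CutCompatible V (lexTop H) (conduit V H) where
  top_notMem := lexTop_notMem hH
  subset _ hx := Or.inr (gridComponentIn_subset hx)
  saturated _ _ hvw hv := Linked.trans hv hvw
  cut _ hp hpR := absurd (runAbove_subset_cuts hH hp) (gridComponentIn_subset hpR).2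

lemma exists_adj_runAbove_of_mem_uncut (hconn : (triGrid.induce V).Connected)
    (hne : (innerHoles V).Nonempty) (ha : a ∈ uncut V) :
    ∃ H ∈ innerHoles V, ∃ u ∈ gridComponentIn (uncut V) a, ∃ z ∈ runAbove V (lexTop H),
      triGrid.Adj u z := by
  obtain ⟨H₀, hH₀⟩ := hne
  obtain ⟨q, hq, rfl, hfin⟩ := id hH₀
  have hb := up_lexTop_mem hq hfin
  have hbcut := runAbove_subset_cuts hH₀ (bottom_mem_runAbove hb)
  have hab : Linked V a _ := linked_of_reachable (hconn.preconnected ⟨a, ha.1⟩ ⟨_, hb⟩)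
  obtain ⟨u, hu, z, hzV, huz, hz⟩ := hab.exists_adj_notMem (mem_gridComponentIn_self ha)
    fun h => (gridComponentIn_subset h).2 hbcut
  obtain ⟨H, hH, hzH⟩ :=
    exists_mem_runAbove_of_notMem_uncut hzV fun hzU => hz (hu.tail huz hzU)
  exact ⟨H, hH, u, hu, z, hzH, huz⟩

lemma assignedHole_spec (hconn : (triGrid.induce V).Connected) (hne : (innerHoles V).Nonempty)
    (ha : a ∈ uncut V) :
    assignedHole V (gridComponentIn (uncut V) a) ∈ innerHoles V ∧
      ∃ u ∈ gridComponentIn (uncut V) a,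
        ∃ z ∈ runAbove V (lexTop (assignedHole V (gridComponentIn (uncut V) a))),
          triGrid.Adj u z :=
  Classical.epsilon_spec (exists_adj_runAbove_of_mem_uncut hconn hne ha)

lemma connected_holeRegion (hconn : (triGrid.induce V).Connected) (hH : H ∈ innerHoles V) :
    (triGrid.induce (holeRegion V H)).Connected := by
  have hbot : ((lexTop H).1, (lexTop H).2 + 1) ∈ runAbove V (lexTop H) := by
    obtain ⟨q, hq, rfl, hfin⟩ := id hH
    exact bottom_mem_runAbove (up_lexTop_mem hq hfin)
  have hcut : ∀ p ∈ runAbove V (lexTop H), Linked (holeRegion V H) p _ := fun p hp =>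
    (linked_bottom_of_mem_runAbove hp).mono Set.subset_union_left
  refine connected_induce_of_linked (Set.subset_union_left hbot) ?_
  rintro x (hx | hx)
  · exact hcut x hx
  obtain ⟨-, u, hu, z, hz, huz⟩ := assignedHole_spec hconn ⟨H, hH⟩ hx.1
  rw [hx.2.2] at hz
  have hclass : gridComponentIn (uncut V) x ⊆ holeRegion V H := fun y hy =>
    (cutCompatible_holeRegion hH).saturated hy (Or.inr hx)
  exact (((linked_gridComponentIn hu).mono hclass).tail huz (Or.inl hz)).trans (hcut z hz)

def simpleRegions (V : Set (ℤ × ℤ)) : Set (Set (ℤ × ℤ)) :=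
  holeRegion V '' innerHoles V ∪ conduit V '' {H ∈ innerHoles V | (conduit V H).Nonempty}

def IsSimpleRegion (V R : Set (ℤ × ℤ)) : Prop :=
  R ⊆ V ∧ (triGrid.induce R).Connected ∧ HoleFree R

lemma isSimpleRegion_of_mem_simpleRegions (hV : V.Finite)
    (hconn : (triGrid.induce V).Connected) (hR : R ∈ simpleRegions V) : IsSimpleRegion V R := by
  rcases hR with ⟨H, hH, rfl⟩ | ⟨H, ⟨hH, a, ha⟩, rfl⟩
  · have hc := cutCompatible_holeRegion hH
    exact ⟨hc.subset_V, connected_holeRegion hconn hH, hc.holeFree hV⟩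
  · have hc := cutCompatible_conduit hH
    exact ⟨hc.subset_V, connected_induce_gridComponentIn ha.mem_left, hc.holeFree hV⟩

lemma sUnion_simpleRegions (hV : V.Finite) (hconn : (triGrid.induce V).Connected)
    (hne : (innerHoles V).Nonempty) : ⋃₀ simpleRegions V = V := by
  refine Set.Subset.antisymm
    (Set.sUnion_subset fun R hR => (isSimpleRegion_of_mem_simpleRegions hV hconn hR).1)
    fun v hv => ?_
  by_cases hvU : v ∈ uncut V
  · by_cases hvc : v ∈ conduits V
    · obtain ⟨H, hH, hvH⟩ := Set.mem_iUnion₂.mp hvc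
      exact ⟨conduit V H, Or.inr ⟨H, ⟨hH, v, hvH⟩, rfl⟩, hvH⟩
    · exact ⟨_, Or.inl ⟨_, (assignedHole_spec hconn hne hvU).1, rfl⟩,
        Or.inr ⟨hvU, hvc, rfl⟩⟩
  · obtain ⟨H, hH, hvH⟩ := exists_mem_runAbove_of_notMem_uncut hv hvU
    exact ⟨_, Or.inl ⟨H, hH, rfl⟩, Or.inl hvH⟩

lemma finite_simpleRegions (hV : V.Finite) : (simpleRegions V).Finite :=
  ((innerHoles_finite hV).image _).union
    (((innerHoles_finite hV).subset (Set.sep_subset _ _)).image _)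

lemma ncard_simpleRegions_le (hV : V.Finite) :
    (simpleRegions V).ncard ≤ 2 * (innerHoles V).ncard := by
  have hfin := innerHoles_finite hV
  calc (simpleRegions V).ncard
      ≤ (holeRegion V '' innerHoles V).ncard +
          (conduit V '' {H ∈ innerHoles V | (conduit V H).Nonempty}).ncard :=
        Set.ncard_union_le _ _
    _ ≤ (innerHoles V).ncard + (innerHoles V).ncard :=
        add_le_add (Set.ncard_image_le hfin)
          ((Set.ncard_image_le (hfin.subset (Set.sep_subset _ _))).trans
            (Set.ncard_le_ncard (Set.sep_subset _ _) hfin))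
    _ = 2 * (innerHoles V).ncard := by ring

lemma holeFree_of_innerHoles_eq_empty (h : innerHoles V = ∅) : HoleFree V :=
  holeFree_of_forall_infinite fun q hq hfin =>
    Set.eq_empty_iff_forall_notMem.mp h _ ⟨q, hq, rfl, hfin⟩

theorem exists_simpleRegion_cover (hV : V.Finite) (hconn : (triGrid.induce V).Connected) :
    ∃ 𝓡 : Set (Set (ℤ × ℤ)), 𝓡.Finite ∧ 𝓡.ncard ≤ 2 * (innerHoles V).ncard + 1 ∧
      ⋃₀ 𝓡 = V ∧ ∀ R ∈ 𝓡, IsSimpleRegion V R := by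
  rcases (innerHoles V).eq_empty_or_nonempty with h | hne
  · refine ⟨{V}, Set.finite_singleton V, by simp, Set.sUnion_singleton V, ?_⟩
    rintro R rfl
    exact ⟨subset_rfl, hconn, holeFree_of_innerHoles_eq_empty h⟩
  · exact ⟨simpleRegions V, finite_simpleRegions hV,
      (ncard_simpleRegions_le hV).trans (Nat.le_succ _), sUnion_simpleRegions hV hconn hne,
      fun R hR => isSimpleRegion_of_mem_simpleRegions hV hconn hR⟩

end TriGrid

open TriGrid in
theorem decomposition_into_simple_regions_general (V : Set (ℤ × ℤ)) (hfin : V.Finite)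
    (hconn : (triGrid.induce V).Connected) (h : ℕ)
    (hholes : {C : (triGrid.induce Vᶜ).ConnectedComponent | C.supp.Finite}.ncard = h) :
    ∃ m : ℕ, m ≤ 3 * h + 1 ∧ ∃ R : Fin m → Set (ℤ × ℤ),
      (∀ i, R i ⊆ V) ∧ (⋃ i, R i) = V ∧
      ∀ i, (triGrid.induce (R i)).Connected ∧ HoleFree (R i) := by
  obtain ⟨𝓡, h𝓡, hcard, hcover, hsimple⟩ := exists_simpleRegion_cover hfin hconn
  obtain ⟨m, R, hR⟩ := h𝓡.fin_embedding
  have hm : m = 𝓡.ncard := by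
    rw [← hR, Set.ncard_range_of_injective R.injective, Nat.card_fin]
  have hRi : ∀ i, IsSimpleRegion V (R i) := fun i => hsimple _ (hR ▸ Set.mem_range_self i)
  refine ⟨m, ?_, R, fun i => (hRi i).1, ?_, fun i => (hRi i).2⟩
  · rw [ncard_innerHoles, hholes] at hcard
    omega
  · rw [← Set.sUnion_range, hR, hcover]

/-- A finite connected induced subgraph of the triangular grid with exactly
`h` inner holes can be decomposed into at most `3h + 1` simple connected regions. -/
theorem decomposition_into_simple_regions (V : Set (ℤ × ℤ)) (hfin : V.Finite)
    (hne : V.Nonempty) (hconn : (triGrid.induce V).Connected) (h : ℕ)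
    (hholes : {C : (triGrid.induce Vᶜ).ConnectedComponent | C.supp.Finite}.ncard = h) :
    ∃ m : ℕ, m ≤ 3 * h + 1 ∧ ∃ R : Fin m → Set (ℤ × ℤ),
      (∀ i, R i ⊆ V) ∧ (⋃ i, R i) = V ∧
      ∀ i, (triGrid.induce (R i)).Connected ∧ HoleFree (R i) :=
  decomposition_into_simple_regions_general V hfin hconn h hholes
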